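/- arXiv:1403.5232 — 2 statements merged into one kernel-verified Lean document; each statement's English description precedes it below -/
import Mathlib

section
/- For a prime p ≥ 5 and 1 ≤ k ≤ (p−1)/2, one has ((1−p)/2)_k · ((1+p)/2)_k ≡ (1/2)_k² · (1 − p² Σ_{j=0}^{k−1} 1/(2j+1)²) (mod p³) in Z_p. -/
/-!
Factorwise `((1-p)/2 + j)((1+p)/2 + j) = (1/2 + j)² - p²/4`, so the left side is exactly
`(1/2)_k² ∏_{j<k} (1 - x_j)` with `x_j = p²/(2j+1)²`. For `2j+1 < p` each `x_j` has norm `p⁻²`,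
and in an ultrametric ring `∏ (1 - x_j)` and `1 - ∑ x_j` differ by terms of degree `≥ 2` in the
`x_j`, hence by norm at most `p⁻⁴`; finally `(1/2)_k` is a `p`-adic integer since `p` is odd.
-/

open Finset

lemma ascPochhammer_eval_eq_prod_range {R : Type*} [CommSemiring R] (n : ℕ) (r : R) :
    (ascPochhammer R n).eval r = ∏ j ∈ range n, (r + j) := by
  induction n with
  | zero => simp
  | succ n ih => rw [ascPochhammer_succ_eval, ih, prod_range_succ]

lemma ascPochhammer_eval_half_sub_mul_eval_half_add {K : Type*} [Field K] [CharZero K]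
    (k : ℕ) (c : K) :
    (ascPochhammer K k).eval ((1 - c) / 2) * (ascPochhammer K k).eval ((1 + c) / 2) =
      (ascPochhammer K k).eval (1 / 2) ^ 2 *
        ∏ j ∈ range k, (1 - c ^ 2 * ((2 * (j : K) + 1) ^ 2)⁻¹) := by
  simp only [ascPochhammer_eval_eq_prod_range, ← prod_mul_distrib, ← prod_pow]
  refine prod_congr rfl fun j _ => ?_
  have hj : 2 * (j : K) + 1 ≠ 0 := by exact_mod_cast (2 * j).succ_ne_zero
  field_simp
  ring

section Ultrametric

open IsUltrametricDist

variable {R : Type*} [NormedCommRing R] [NormOneClass R] [IsUltrametricDist R]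

lemma norm_ascPochhammer_eval_le_one {x : R} (hx : ‖x‖ ≤ 1) (n : ℕ) :
    ‖(ascPochhammer R n).eval x‖ ≤ 1 := by
  rw [ascPochhammer_eval_eq_prod_range]
  refine (Finset.norm_prod_le _ _).trans (prod_le_one (fun _ _ => norm_nonneg _) fun j _ => ?_)
  exact (norm_add_le_max _ _).trans (max_le hx (norm_natCast_le_one R j))

lemma norm_prod_one_sub_sub_one_sub_sum_le {ι : Type*} (s : Finset ι) {x : ι → R} {ε : ℝ}
    (hε : ε ≤ 1) (hx : ∀ i ∈ s, ‖x i‖ ≤ ε) :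
    ‖∏ i ∈ s, (1 - x i) - (1 - ∑ i ∈ s, x i)‖ ≤ ε ^ 2 := by
  induction s using Finset.cons_induction with
  | empty => simpa using sq_nonneg ε
  | cons a s ha ih =>
    simp only [mem_cons, forall_eq_or_imp] at hx
    obtain ⟨hxa, hxs⟩ := hx
    have hε0 : 0 ≤ ε := (norm_nonneg _).trans hxa
    have hsum : ‖∑ i ∈ s, x i‖ ≤ ε := norm_sum_le_of_forall_le_of_nonneg hε0 hxs
    have hfactor : ‖1 - x a‖ ≤ 1 := sub_eq_add_neg (1 : R) (x a) ▸
      (norm_add_le_max _ _).trans (max_le norm_one.le ((norm_neg (x a)).trans_le (hxa.trans hε)))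
    rw [prod_cons, sum_cons, show ∀ P S : R, (1 - x a) * P - (1 - (x a + S)) =
      (1 - x a) * (P - (1 - S)) + x a * S by intros; ring]
    refine (norm_add_le_max _ _).trans (max_le ?_ ?_)
    · calc ‖(1 - x a) * (∏ i ∈ s, (1 - x i) - (1 - ∑ i ∈ s, x i))‖
          ≤ 1 * ε ^ 2 := (norm_mul_le _ _).trans (mul_le_mul hfactor (ih hxs) (norm_nonneg _)
            zero_le_one)
        _ = ε ^ 2 := one_mul _
    · exact (norm_mul_le _ _).trans (sq ε ▸ mul_le_mul hxa hsum (norm_nonneg _) hε0)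

end Ultrametric

lemma Padic.norm_natCast_eq_one_of_lt {p : ℕ} [Fact p.Prime] {m : ℕ} (hm : 0 < m) (hmp : m < p) :
    ‖(m : ℚ_[p])‖ = 1 :=
  Padic.norm_natCast_eq_one_iff.mpr
    ((Nat.Prime.coprime_iff_not_dvd Fact.out).mpr (Nat.not_dvd_of_pos_of_lt hm hmp))

theorem pochhammer_half_product_general (p : ℕ) [Fact p.Prime] (hp : 5 ≤ p)
    (k : ℕ) (hk2 : k ≤ (p - 1) / 2) :
    ‖(ascPochhammer ℚ_[p] k).eval ((1 - (p : ℚ_[p])) / 2) *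
        (ascPochhammer ℚ_[p] k).eval ((1 + (p : ℚ_[p])) / 2) -
        ((ascPochhammer ℚ_[p] k).eval (1 / 2)) ^ 2 *
          (1 - (p : ℚ_[p]) ^ 2 *
            (∑ j ∈ Finset.range k, ((2 * (j : ℚ_[p]) + 1) ^ 2)⁻¹))‖
      ≤ (p : ℝ) ^ (-3 : ℤ) := by
  have hp1 : (1 : ℝ) ≤ p := by exact_mod_cast (Fact.out : p.Prime).one_le
  have hhalf : ‖(1 / 2 : ℚ_[p])‖ ≤ 1 := by
    have h2 : ‖((2 : ℕ) : ℚ_[p])‖ = 1 := Padic.norm_natCast_eq_one_of_lt two_pos (by omega)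
    rw [norm_div, norm_one, ← Nat.cast_ofNat, h2, div_one]
  have hx : ∀ j ∈ range k, ‖(p : ℚ_[p]) ^ 2 * ((2 * (j : ℚ_[p]) + 1) ^ 2)⁻¹‖ ≤ (p : ℝ)⁻¹ ^ 2 := by
    intro j hj
    have hunit : ‖((2 * j + 1 : ℕ) : ℚ_[p])‖ = 1 :=
      Padic.norm_natCast_eq_one_of_lt (2 * j).succ_pos (by have := mem_range.mp hj; omega)
    push_cast at hunit
    simp [hunit]
  rw [ascPochhammer_eval_half_sub_mul_eval_half_add, mul_sum, ← mul_sub, norm_mul, norm_pow]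
  calc _ ≤ 1 * ((p : ℝ)⁻¹ ^ 2) ^ 2 :=
        mul_le_mul (pow_le_one₀ (norm_nonneg _) (norm_ascPochhammer_eval_le_one hhalf k))
          (norm_prod_one_sub_sub_one_sub_sum_le _ (by bound) hx) (norm_nonneg _) zero_le_one
    _ = (p : ℝ) ^ (-4 : ℤ) := by rw [one_mul, ← pow_mul, inv_pow, ← zpow_natCast, ← zpow_neg]; rfl
    _ ≤ (p : ℝ) ^ (-3 : ℤ) := zpow_le_zpow_right₀ hp1 (by norm_num)

/-- For `p ≥ 5` prime and `1 ≤ k ≤ (p-1)/2`,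
`((1-p)/2)_k ((1+p)/2)_k ≡ (1/2)_k² (1 - p² ∑_{j<k} 1/(2j+1)²) (mod p³)`. -/
theorem pochhammer_half_product (p : ℕ) [Fact p.Prime] (hp : 5 ≤ p)
    (k : ℕ) (hk1 : 1 ≤ k) (hk2 : k ≤ (p - 1) / 2) :
    ‖(ascPochhammer ℚ_[p] k).eval ((1 - (p : ℚ_[p])) / 2) *
        (ascPochhammer ℚ_[p] k).eval ((1 + (p : ℚ_[p])) / 2) -
        ((ascPochhammer ℚ_[p] k).eval (1 / 2)) ^ 2 *
          (1 - (p : ℚ_[p]) ^ 2 *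
            (∑ j ∈ Finset.range k, ((2 * (j : ℚ_[p]) + 1) ^ 2)⁻¹))‖
      ≤ (p : ℝ) ^ (-3 : ℤ) :=
  pochhammer_half_product_general p hp k hk2
end

section
/- For a prime p ≡ 3 (mod 4), the terminating hypergeometric sum Σ_{k=0}^{(p−1)/2} ((1−p)/2)_k ((1+p)/2)_k (1/2)_k / ((1)_k (1)_k k!) equals 0. -/
/-!
Put `n = (p - 1) / 2`, which is odd. Since `(1)ₖ = k!`, the `k`-th summand is the `k`-th
coefficient `(-1)ᵏ C(n, k) C(n + k, n)` of the shifted Legendre polynomial `Pₙ` times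
`(1/2)ₖ / k! = multichoose (1/2) k`, so the sum is `L (Pₙ)` for the linear functional
`L : Xᵏ ↦ multichoose (1/2) k`. By Chu–Vandermonde, `L (f (1 - X)) = L f`, while
`Pₙ (1 - X) = (-1)ⁿ Pₙ`; hence `L (Pₙ) = -L (Pₙ) = 0`.
-/

open Finset

theorem ascPochhammer_eval_neg_natCast {R : Type*} [CommRing R] (n k : ℕ) :
    (ascPochhammer R k).eval (-(n : R)) = (-1) ^ k * k.factorial * n.choose k := by
  rw [ascPochhammer_eval_neg_eq_descPochhammer, descPochhammer_eval_eq_descFactorial,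
    Nat.descFactorial_eq_factorial_mul_choose]
  push_cast
  ring

theorem ascPochhammer_eval_natCast_add_one {R : Type*} [Semiring R] (n k : ℕ) :
    (ascPochhammer R k).eval ((n : R) + 1) = k.factorial * (n + k).choose n := by
  rw [← Nat.cast_add_one, ascPochhammer_nat_eq_natCast_ascFactorial,
    Nat.ascFactorial_eq_factorial_mul_choose, Nat.choose_symm_add]
  push_cast
  rfl

theorem ascPochhammer_eval_eq_factorial_mul_multichoose {R : Type*} [Ring R] [BinomialRing R]
    (r : R) (k : ℕ) : (ascPochhammer R k).eval r = k.factorial * Ring.multichoose r k := by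
  rw [← Polynomial.ascPochhammer_smeval_eq_eval,
    ← Ring.factorial_nsmul_multichoose_eq_ascPochhammer, nsmul_eq_mul]

namespace Polynomial

variable {R : Type*} [CommRing R] [BinomialRing R]

/-- For `0 < r < 1` the values `multichoose r k = (r)ₖ / k!` are the moments of the
Beta distribution with parameters `(r, 1 - r)`; this is integration against it. -/
noncomputable def multichooseEval (r : R) : R[X] →ₗ[R] R :=
  lsum fun k => Ring.multichoose r k • LinearMap.id

theorem multichooseEval_C_mul_X_pow (r a : R) (k : ℕ) :
    multichooseEval r (C a * X ^ k) = a * Ring.multichoose r k := by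
  rw [C_mul_X_pow_eq_monomial, multichooseEval, lsum_apply, sum_monomial_index] <;>
    simp [mul_comm]

theorem multichooseEval_X_pow (r : R) (k : ℕ) :
    multichooseEval r (X ^ k) = Ring.multichoose r k := by
  simpa using multichooseEval_C_mul_X_pow r 1 k

/-- Chu–Vandermonde for `Ring.choose (k + -r) k`, as `(-1) ^ j * multichoose r j = choose (-r) j`
and `multichoose (1 - r) k = choose (k - r) k`. -/
theorem sum_range_choose_mul_neg_one_pow_mul_multichoose (r : R) (k : ℕ) :
    ∑ j ∈ range (k + 1), (k.choose j : R) * ((-1) ^ j * Ring.multichoose r j) =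
      Ring.multichoose (1 - r) k := by
  have vandermonde := Ring.add_choose_eq (r := -r) (s := (k : R)) k (Commute.all _ _)
  rw [Nat.sum_antidiagonal_eq_sum_range_succ
    (fun i j => Ring.choose (-r) i * Ring.choose (k : R) j)] at vandermonde
  rw [Ring.multichoose_eq, show 1 - r + k - 1 = -r + k by ring, vandermonde]
  refine sum_congr rfl fun j hj => ?_
  rw [Ring.choose_natCast, Nat.choose_symm (by simpa [Nat.lt_succ_iff] using hj),
    Ring.choose_neg', Int.negOnePow_def, Units.smul_def]
  simp [mul_comm]

theorem multichooseEval_one_sub_X_pow (r : R) (k : ℕ) :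
    multichooseEval r ((1 - X) ^ k) = Ring.multichoose (1 - r) k := by
  rw [← sum_range_choose_mul_neg_one_pow_mul_multichoose, sub_eq_neg_add, add_pow, map_sum]
  refine sum_congr rfl fun j _ => ?_
  rw [one_pow, mul_one, neg_pow, ← C_1, ← C_neg, ← C_pow, mul_comm, ← mul_assoc,
    ← C_eq_natCast, ← C_mul, multichooseEval_C_mul_X_pow, mul_assoc]

theorem multichooseEval_comp_one_sub_X (r : R) (p : R[X]) :
    multichooseEval r (p.comp (1 - X)) = multichooseEval (1 - r) p := by
  induction p using Polynomial.induction_on' with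
  | add p q hp hq => rw [add_comp, map_add, map_add, hp, hq]
  | monomial k a =>
    rw [← C_mul_X_pow_eq_monomial, mul_comp, C_comp, X_pow_comp, ← smul_eq_C_mul,
      ← smul_eq_C_mul, map_smul, map_smul, multichooseEval_one_sub_X_pow, multichooseEval_X_pow]

theorem multichooseEval_shiftedLegendre (r : R) (n : ℕ) :
    multichooseEval r ((shiftedLegendre n).map (Int.castRingHom R)) =
      ∑ k ∈ range (n + 1),
        ((-1) ^ k * n.choose k * (n + k).choose n) * Ring.multichoose r k := by
  simp only [shiftedLegendre, Polynomial.map_sum, Polynomial.map_mul, map_C, Polynomial.map_pow,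
    map_X, map_sum, multichooseEval_C_mul_X_pow]
  simp

theorem multichooseEval_shiftedLegendre_eq_neg_one_pow_mul (r : R) (n : ℕ) :
    multichooseEval r ((shiftedLegendre n).map (Int.castRingHom R)) =
      (-1) ^ n * multichooseEval (1 - r) ((shiftedLegendre n).map (Int.castRingHom R)) := by
  have reflect := congrArg (map (Int.castRingHom R))
    (neg_one_pow_mul_shiftedLegendre_comp_one_sub_X_eq n)
  rw [Polynomial.map_mul, map_comp] at reflect
  conv_lhs => rw [← reflect]
  rw [Polynomial.map_pow, Polynomial.map_neg, Polynomial.map_one, ← C_1, ← C_neg, ← C_pow,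
    ← smul_eq_C_mul, map_smul, Polynomial.map_sub, Polynomial.map_one, map_X,
    multichooseEval_comp_one_sub_X, smul_eq_mul]

theorem multichooseEval_half_shiftedLegendre_of_odd {K : Type*} [Field K] [CharZero K]
    {n : ℕ} (hn : Odd n) :
    multichooseEval (1 / 2 : K) ((shiftedLegendre n).map (Int.castRingHom K)) = 0 := by
  have h := multichooseEval_shiftedLegendre_eq_neg_one_pow_mul (1 / 2 : K) n
  rw [hn.neg_one_pow, show (1 : K) - 1 / 2 = 1 / 2 by norm_num, neg_one_mul,
    eq_neg_iff_add_eq_zero, ← two_mul, mul_eq_zero] at h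
  exact h.resolve_left two_ne_zero

end Polynomial

open Polynomial

theorem ascPochhammer_ratio_eq_shiftedLegendre_coeff_mul_multichoose {K : Type*} [Field K]
    [CharZero K] (n k : ℕ) (r : K) :
    (ascPochhammer K k).eval (-(n : K)) * (ascPochhammer K k).eval ((n : K) + 1) *
        (ascPochhammer K k).eval r /
      ((ascPochhammer K k).eval 1 * (ascPochhammer K k).eval 1 * k.factorial) =
    (-1) ^ k * n.choose k * (n + k).choose n * Ring.multichoose r k := by
  have hk : (k.factorial : K) ≠ 0 := Nat.cast_ne_zero.mpr k.factorial_ne_zero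
  rw [ascPochhammer_eval_neg_natCast, ascPochhammer_eval_natCast_add_one,
    ascPochhammer_eval_eq_factorial_mul_multichoose, ascPochhammer_eval_one]
  field_simp

theorem threeF2_vanishing_general (p : ℕ) (hp4 : p % 4 = 3) :
    (∑ k ∈ Finset.range ((p - 1) / 2 + 1),
        (ascPochhammer ℚ k).eval ((1 - (p : ℚ)) / 2) *
          (ascPochhammer ℚ k).eval ((1 + (p : ℚ)) / 2) *
          (ascPochhammer ℚ k).eval (1 / 2) /
        ((ascPochhammer ℚ k).eval 1 * (ascPochhammer ℚ k).eval 1 *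
          (k.factorial : ℚ))) = 0 := by
  set n := (p - 1) / 2
  have hp : (p : ℚ) = 2 * n + 1 := by exact_mod_cast (show p = 2 * n + 1 by omega)
  have hn : Odd n := ⟨p / 4, by omega⟩
  rw [hp, show (1 - (2 * n + 1 : ℚ)) / 2 = -n by ring,
    show (1 + (2 * n + 1 : ℚ)) / 2 = n + 1 by ring]
  simp_rw [ascPochhammer_ratio_eq_shiftedLegendre_coeff_mul_multichoose]
  rw [← multichooseEval_shiftedLegendre, multichooseEval_half_shiftedLegendre_of_odd hn]

/-- For a prime `p ≡ 3 (mod 4)`, the terminating sum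
`∑_{k=0}^{(p-1)/2} ((1-p)/2)_k ((1+p)/2)_k (1/2)_k / ((1)_k (1)_k k!)` vanishes. -/
theorem threeF2_vanishing (p : ℕ) (hp : p.Prime) (hp4 : p % 4 = 3) :
    (∑ k ∈ Finset.range ((p - 1) / 2 + 1),
        (ascPochhammer ℚ k).eval ((1 - (p : ℚ)) / 2) *
          (ascPochhammer ℚ k).eval ((1 + (p : ℚ)) / 2) *
          (ascPochhammer ℚ k).eval (1 / 2) /
        ((ascPochhammer ℚ k).eval 1 * (ascPochhammer ℚ k).eval 1 *
          (k.factorial : ℚ))) = 0 :=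
  threeF2_vanishing_general p hp4
end
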